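/- The metric g₀ is Ricci-flat: for every x ∈ ℝⁿ and all j, k ∈ {1,…,n}, one has Σ_{i=1}^{n} (R₍ᵢ,ⱼ,ₖ₎(x))ᵢ = 0, where (v)ᵢ denotes the i-th coordinate of v ∈ ℝⁿ. -/

import Mathlib

/-- The `i`-th standard basis vector `eᵢ` of `ℝⁿ` (0-based). -/
def stdBasis (n : ℕ) (i : Fin n) : Fin n → ℝ := fun k => if k = i then 1 else 0

/-- The Christoffel vectors of `g₀`: `Γ₁₁(x) = -x₃ e₄`, `Γ₁₃(x) = Γ₃₁(x) = x₃ e₂`,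
and `Γᵢⱼ(x) = 0` otherwise (1-based indices; here `i j` are 0-based, so
`Γ₀₀(x) = -x₂e₃` and `Γ₀₂(x) = Γ₂₀(x) = x₂e₁`). -/
def Gamma (n : ℕ) (hn : 4 ≤ n) (i j : Fin n) (x : Fin n → ℝ) : Fin n → ℝ :=
  fun k =>
    if (i : ℕ) = 0 ∧ (j : ℕ) = 0 ∧ (k : ℕ) = 3 then -x ⟨2, by omega⟩
    else if (((i : ℕ) = 0 ∧ (j : ℕ) = 2) ∨ ((i : ℕ) = 2 ∧ (j : ℕ) = 0)) ∧ (k : ℕ) = 1 then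
      x ⟨2, by omega⟩
    else 0

/-- The curvature components
`R₍ᵢ,ⱼ,ₖ₎(x) = ∂ᵢΓⱼₖ(x) − ∂ⱼΓᵢₖ(x) + Σₘ (Γⱼₖ(x))ₘ Γᵢₘ(x) − Σₘ (Γᵢₖ(x))ₘ Γⱼₘ(x)`. -/
noncomputable def Rcurv (n : ℕ) (hn : 4 ≤ n) (i j k : Fin n) (x : Fin n → ℝ) :
    Fin n → ℝ :=
  fun l =>
    fderiv ℝ (fun y => Gamma n hn j k y l) x (stdBasis n i)
    - fderiv ℝ (fun y => Gamma n hn i k y l) x (stdBasis n j)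
    + ∑ m : Fin n, Gamma n hn j k x m * Gamma n hn i m x l
    - ∑ m : Fin n, Gamma n hn i k x m * Gamma n hn j m x l

/-!
The Christoffel vectors are linear in `x₃`, take values in `span {e₂, e₄}`, and vanish unless
both lower indices lie in `{1, 3}`. Hence every product `(Γⱼₖ)ₘ (Γᵢₘ)ₗ` vanishes, and on the
diagonal `l = i` so do both derivative terms: `∂ᵢ` is nonzero only for `i = 3`, where the upper
index `3` is not in `{2, 4}`, and `(Γᵢₖ)ᵢ` would need `i ∈ {1, 3} ∩ {2, 4}`.
-/

section Christoffel

variable {n : ℕ} {hn : 4 ≤ n}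

lemma Gamma_apply_ne_zero {i j l : Fin n} {x : Fin n → ℝ} (h : Gamma n hn i j x l ≠ 0) :
    ((i : ℕ) = 0 ∨ (i : ℕ) = 2) ∧ ((j : ℕ) = 0 ∨ (j : ℕ) = 2) ∧
      ((l : ℕ) = 1 ∨ (l : ℕ) = 3) ∧ x ⟨2, by omega⟩ ≠ 0 := by
  unfold Gamma at h
  split_ifs at h with h₁ h₂
  · exact ⟨by omega, by omega, by omega, neg_ne_zero.mp h⟩
  · exact ⟨by omega, by omega, by omega, h⟩
  · exact absurd rfl h

lemma Gamma_apply_left_self (i k : Fin n) (x : Fin n → ℝ) : Gamma n hn i k x i = 0 := by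
  by_contra h
  have := Gamma_apply_ne_zero h
  omega

lemma Gamma_apply_stdBasis_self (j k i : Fin n) : Gamma n hn j k (stdBasis n i) i = 0 := by
  by_contra h
  obtain ⟨-, -, hi, h₂⟩ := Gamma_apply_ne_zero h
  refine h₂ (if_neg fun h₂i => ?_)
  have : (i : ℕ) = 2 := (congrArg Fin.val h₂i).symm
  omega

lemma Gamma_apply_mul_Gamma_apply_eq_zero (i j k m l : Fin n) (x y : Fin n → ℝ) :
    Gamma n hn i k x m * Gamma n hn j m y l = 0 := by
  by_contra h
  obtain ⟨h₁, h₂⟩ := mul_ne_zero_iff.mp h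
  have := (Gamma_apply_ne_zero h₁).2.2.1
  have := (Gamma_apply_ne_zero h₂).2.1
  omega

variable (n hn) in
def GammaLinear (i j l : Fin n) : (Fin n → ℝ) →ₗ[ℝ] ℝ where
  toFun y := Gamma n hn i j y l
  map_add' y z := by simp only [Gamma, Pi.add_apply]; split_ifs <;> ring
  map_smul' c y := by
    simp only [Gamma, Pi.smul_apply, smul_eq_mul, RingHom.id_apply]
    split_ifs <;> ring

lemma fderiv_Gamma_apply (i j l : Fin n) (x v : Fin n → ℝ) :
    fderiv ℝ (fun y => Gamma n hn i j y l) x v = Gamma n hn i j v l :=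
  DFunLike.congr_fun (LinearMap.toContinuousLinearMap (GammaLinear n hn i j l)).fderiv v

end Christoffel

/-- The metric `g₀` is Ricci-flat: `Σᵢ (R₍ᵢ,ⱼ,ₖ₎(x))ᵢ = 0` for all `x`, `j`, `k`. -/
theorem ricci_flat (n : ℕ) (hn : 4 ≤ n) (x : Fin n → ℝ) (j k : Fin n) :
    ∑ i : Fin n, Rcurv n hn i j k x i = 0 := by
  refine Finset.sum_eq_zero fun i _ => ?_
  simp only [Rcurv, fderiv_Gamma_apply]
  simp only [Gamma_apply_stdBasis_self, Gamma_apply_left_self,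
    Gamma_apply_mul_Gamma_apply_eq_zero, mul_zero, Finset.sum_const_zero, sub_self, add_zero]
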